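/- Let g : ZMod N → ℂ be a generator such that ⟨g, Π_{(0,ℓ)} g⟩ = 0 for every ℓ ∈ ZMod N with ℓ ≠ 0. Then the Gabor system (g_λ)_{λ ∈ (ZMod N)²} does not allow phase retrieval: there exist x, y : ZMod N → ℂ with |⟨x, g_λ⟩| = |⟨y, g_λ⟩| for every λ ∈ (ZMod N)², yet x ≠ c • y for every c ∈ ℂ with |c| = 1. -/

import Mathlib

open Complex Finset

/-- `gw N m = ω^m` where `ω = exp(2πi/N)` and `m : ZMod N`. -/
noncomputable def gw (N : ℕ) (m : ZMod N) : ℂ :=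
  Complex.exp (2 * Real.pi * Complex.I * (m.val : ℂ) / (N : ℂ))

/-- Translation operator `(T_p x)(n) = x(n-p)`. -/
def Tr (N : ℕ) (p : ZMod N) (x : ZMod N → ℂ) : ZMod N → ℂ :=
  fun n => x (n - p)

/-- Modulation operator `(M_ℓ x)(n) = ω^{ℓ·n} x(n)`. -/
noncomputable def Md (N : ℕ) (l : ZMod N) (x : ZMod N → ℂ) : ZMod N → ℂ :=
  fun n => gw N (l * n) * x n

/-- Time-frequency shift `Π_{(p,ℓ)} = M_ℓ ∘ T_p`. -/
noncomputable def Pig (N : ℕ) (p l : ZMod N) (x : ZMod N → ℂ) : ZMod N → ℂ :=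
  Md N l (Tr N p x)

/-- Inner product, conjugate linear in the first argument. -/
noncomputable def inn (N : ℕ) [NeZero N] (x y : ZMod N → ℂ) : ℂ :=
  ∑ j : ZMod N, (starRingEnd ℂ) (x j) * y j

/-! The hypothesis says that the discrete Fourier transform of `|g|²` vanishes off `0`, so by
Fourier inversion `|g|` is constant. Hence for the point masses `δ_a` we get
`|⟨δ_a, g_(p,ℓ)⟩| = |g (a - p)|`, independent of `a`, while `δ_0` and `δ_1` are not
multiples of each other. -/

open ZMod

lemma ZMod.apply_eq_of_dft_eq_zero {N : ℕ} [NeZero N] {E : Type*} [AddCommGroup E]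
    [Module ℂ E] {Φ : ZMod N → E} (h : ∀ k ≠ 0, 𝓕 Φ k = 0) (a : ZMod N) :
    Φ a = (N : ℂ)⁻¹ • ∑ j, Φ j := by
  have inversion := congr_fun (dft.symm_apply_apply Φ) a
  rw [invDFT_apply, sum_eq_single 0 (fun k _ hk ↦ by rw [h k hk, smul_zero])
    (fun h0 ↦ absurd (mem_univ 0) h0), zero_mul, AddChar.map_zero_eq_one, one_smul,
    dft_apply_zero] at inversion
  exact inversion.symm

section TimeFrequency

variable {N : ℕ} [NeZero N]

lemma gw_eq_stdAddChar (m : ZMod N) : gw N m = stdAddChar m := by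
  rw [stdAddChar_apply, toCircle_apply, gw]

lemma norm_gw (m : ZMod N) : ‖gw N m‖ = 1 := by
  rw [gw_eq_stdAddChar, stdAddChar_apply, Circle.norm_coe]

lemma inn_self_Pig_zero_eq_dft_normSq (g : ZMod N → ℂ) (l : ZMod N) :
    inn N g (Pig N 0 l g) = 𝓕 (fun j ↦ ((‖g j‖ ^ 2 : ℝ) : ℂ)) (-l) := by
  rw [inn, dft_apply]
  refine sum_congr rfl fun j _ ↦ ?_
  rw [Pig, Md, Tr, sub_zero, gw_eq_stdAddChar, mul_neg, neg_neg, mul_comm l, smul_eq_mul,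
    ofReal_pow, ← mul_conj']
  ring

lemma norm_eq_of_inn_self_Pig_zero_eq_zero {g : ZMod N → ℂ}
    (hg : ∀ l ≠ 0, inn N g (Pig N 0 l g) = 0) (a b : ZMod N) : ‖g a‖ = ‖g b‖ := by
  have hdft : ∀ k ≠ 0, 𝓕 (fun j ↦ ((‖g j‖ ^ 2 : ℝ) : ℂ)) k = 0 := fun k hk ↦ by
    simpa only [inn_self_Pig_zero_eq_dft_normSq, neg_neg] using hg (-k) (neg_ne_zero.mpr hk)
  have hsq : ‖g a‖ ^ 2 = ‖g b‖ ^ 2 := by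
    exact_mod_cast (apply_eq_of_dft_eq_zero hdft a).trans (apply_eq_of_dft_eq_zero hdft b).symm
  exact (pow_left_inj₀ (norm_nonneg _) (norm_nonneg _) two_ne_zero).mp hsq

lemma inn_single_left (a : ZMod N) (y : ZMod N → ℂ) : inn N (Pi.single a 1) y = y a := by
  simp [inn, Pi.single_apply, apply_ite (starRingEnd ℂ), ite_mul]

lemma norm_inn_single_Pig (a p l : ZMod N) (g : ZMod N → ℂ) :
    ‖inn N (Pi.single a 1) (Pig N p l g)‖ = ‖g (a - p)‖ := by
  rw [inn_single_left, Pig, Md, Tr, norm_mul, norm_gw, one_mul]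

end TimeFrequency

/-- If `⟨g, Π_{(0,ℓ)} g⟩ = 0` for all `ℓ ≠ 0`, then the Gabor system does not
allow phase retrieval. -/
theorem no_phase_retrieval_vanishing_diagonal (N : ℕ) [NeZero N] (hN : 2 ≤ N)
    (g : ZMod N → ℂ)
    (hg : ∀ l : ZMod N, l ≠ 0 → inn N g (Pig N 0 l g) = 0) :
    ∃ x y : ZMod N → ℂ,
      (∀ p l : ZMod N,
        ‖inn N x (Pig N p l g)‖ = ‖inn N y (Pig N p l g)‖) ∧
      ∀ c : ℂ, ‖c‖ = 1 → x ≠ c • y := by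
  have : Nontrivial (ZMod N) := ZMod.nontrivial_iff.mpr (by omega)
  refine ⟨Pi.single 0 1, Pi.single 1 1, fun p l ↦ ?_, fun c _ h ↦ ?_⟩
  · rw [norm_inn_single_Pig, norm_inn_single_Pig]
    exact norm_eq_of_inn_self_Pig_zero_eq_zero hg _ _
  · have h0 := congr_fun h 0
    rw [Pi.smul_apply, Pi.single_eq_same, Pi.single_eq_of_ne zero_ne_one, smul_zero] at h0
    exact one_ne_zero h0
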